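/- Let X be a Markov chain with finite state space S, and let x and y be any two states. Then for all integers t > 0, P_x(τ(y) = t) ≤ (1/t)·Σ_{z ∈ S} p*(x, z), where p*(x,z) = sup_{s ≥ 0} p^s(x,z) is the maximal transition probability from x to z. -/

import Mathlib

open Finset

/-- A (row-)stochastic transition matrix: the transition kernel of a Markov chain
on the finite state space `S`. -/
def IsStochastic {S : Type*} [Fintype S] (p : Matrix S S ℝ) : Prop :=
  (∀ a b, 0 ≤ p a b) ∧ ∀ a, ∑ b, p a b = 1

/-- The probability weight of a finite trajectory `z 0, z 1, …, z m` of the chain. -/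
noncomputable def pathWeight {S : Type*} (p : Matrix S S ℝ) {m : ℕ} (z : Fin (m + 1) → S) : ℝ :=
  ∏ i : Fin m, p (z i.castSucc) (z i.succ)

open scoped Classical in
/-- `P_x(A)` for an event `A` depending on the trajectory `X_0, X_1, …, X_m`
of the chain started at `x`. -/
noncomputable def eventProb {S : Type*} [Fintype S] (p : Matrix S S ℝ) (x : S) (m : ℕ)
    (A : (Fin (m + 1) → S) → Prop) : ℝ :=
  ∑ z : Fin (m + 1) → S, if z 0 = x ∧ A z then pathWeight p z else 0

/-- `P_x(τ(y) = t)`: the probability that the chain started at `x` first visits `y`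
exactly at time `t`. -/
noncomputable def hitProbEq {S : Type*} [Fintype S] (p : Matrix S S ℝ) (x y : S) (t : ℕ) : ℝ :=
  eventProb p x t fun z => z (Fin.last t) = y ∧ ∀ i : Fin (t + 1), (i : ℕ) < t → z i ≠ y

/-- `p*(x, y) = sup_{t ≥ 0} p^t(x, y)`, the maximal transition probability from `x` to `y`. -/
noncomputable def maxProb {S : Type*} [Fintype S] [DecidableEq S]
    (p : Matrix S S ℝ) (x y : S) : ℝ :=
  ⨆ t : ℕ, (p ^ t) x y

/-!
For `1 ≤ s ≤ t`, a first visit to `y` at time `t` forces the chain restarted from `X_s` to make its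
first visit at time `t - s`, so `P_x(τ(y) = t) ≤ ∑_z p^s(x, z) P_z(τ(y) = t - s) ≤
∑_z p*(x, z) P_z(τ(y) = t - s)`. Summing over `s` and using that the events `τ(y) = u`, `u < t`, are
disjoint gives `t P_x(τ(y) = t) ≤ ∑_z p*(x, z)`. Both inequalities follow by first-step analysis.
-/

section

variable {S : Type*} {p : Matrix S S ℝ}

lemma pathWeight_cons {m : ℕ} (x : S) (v : Fin (m + 1) → S) :
    pathWeight p (Fin.cons x v : Fin (m + 2) → S) = p x (v 0) * pathWeight p v := by
  simp [pathWeight, Fin.prod_univ_succ]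

def FirstVisitAtEnd (y : S) {n : ℕ} (z : Fin (n + 1) → S) : Prop :=
  z (Fin.last n) = y ∧ ∀ i : Fin (n + 1), (i : ℕ) < n → z i ≠ y

lemma firstVisitAtEnd_cons {n : ℕ} (x y : S) (v : Fin (n + 1) → S) :
    FirstVisitAtEnd y (Fin.cons x v : Fin (n + 2) → S) ↔ x ≠ y ∧ FirstVisitAtEnd y v := by
  simp [FirstVisitAtEnd, Fin.forall_fin_succ, ← Fin.succ_last]
  tauto

variable [Fintype S]

lemma eventProb_nonneg (hp : ∀ a b, 0 ≤ p a b) (x : S) (m : ℕ) (A : (Fin (m + 1) → S) → Prop) :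
    0 ≤ eventProb p x m A :=
  sum_nonneg fun _ _ => by classical exact ite_nonneg (prod_nonneg fun _ _ => hp _ _) le_rfl

lemma eventProb_zero (x : S) (A : (Fin 1 → S) → Prop) [DecidablePred A] :
    eventProb p x 0 A = if A (fun _ => x) then 1 else 0 := by
  classical
  rw [eventProb, Fintype.sum_eq_single (fun _ => x)]
  · simp [pathWeight]
  · intro z hz
    rw [if_neg]
    rintro ⟨hz0, -⟩
    exact hz (funext fun i => by rwa [Fin.fin_one_eq_zero i])

lemma eventProb_succ (x : S) (m : ℕ) (A : (Fin (m + 2) → S) → Prop) :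
    eventProb p x (m + 1) A = ∑ b, p x b * eventProb p b m (fun v => A (Fin.cons x v)) := by
  classical
  simp only [eventProb, mul_sum]
  rw [← (Fin.consEquiv fun _ => S).sum_comp, Fintype.sum_prod_type]
  conv_rhs => rw [sum_comm]
  simp [Fin.consEquiv, pathWeight_cons, ite_and]

lemma hitProbEq_nonneg (hp : ∀ a b, 0 ≤ p a b) (x y : S) (n : ℕ) : 0 ≤ hitProbEq p x y n :=
  eventProb_nonneg hp x n _

variable [DecidableEq S]

lemma hitProbEq_zero (x y : S) : hitProbEq p x y 0 = if x = y then 1 else 0 := by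
  rw [hitProbEq, eventProb_zero]
  simp

lemma hitProbEq_succ (x y : S) (n : ℕ) :
    hitProbEq p x y (n + 1) = if x = y then 0 else ∑ b, p x b * hitProbEq p b y n := by
  change eventProb p x (n + 1) (FirstVisitAtEnd y) = _
  simp_rw [eventProb_succ, firstVisitAtEnd_cons]
  split_ifs with hxy
  · simp [eventProb, hxy]
  · simp only [ne_eq, hxy, not_false_eq_true, true_and]
    rfl

lemma hitProbEq_add_le (hp : ∀ a b, 0 ≤ p a b) (x y : S) (u s : ℕ) :
    hitProbEq p x y (u + s) ≤ ∑ c, (p ^ s) x c * hitProbEq p c y u := by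
  induction s generalizing x with
  | zero => simp [Matrix.one_apply]
  | succ s ih =>
    rw [← add_assoc, hitProbEq_succ]
    split_ifs
    · exact sum_nonneg fun c _ =>
        mul_nonneg (Matrix.pow_apply_nonneg hp _ x c) (hitProbEq_nonneg hp c y u)
    · calc ∑ b, p x b * hitProbEq p b y (u + s)
          ≤ ∑ b, p x b * ∑ c, (p ^ s) b c * hitProbEq p c y u :=
            sum_le_sum fun b _ => mul_le_mul_of_nonneg_left (ih b) (hp x b)
        _ = ∑ c, (p ^ (s + 1)) x c * hitProbEq p c y u := by
            simp only [pow_succ', Matrix.mul_apply, mul_sum, sum_mul, mul_assoc]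
            exact sum_comm

lemma sum_range_hitProbEq_le_one (hp : IsStochastic p) (x y : S) (n : ℕ) :
    ∑ u ∈ range n, hitProbEq p x y u ≤ 1 := by
  induction n generalizing x with
  | zero => simp
  | succ n ih =>
    rw [sum_range_succ', hitProbEq_zero]
    simp only [hitProbEq_succ]
    split_ifs
    · simp
    · calc ∑ u ∈ range n, ∑ b, p x b * hitProbEq p b y u + 0
          = ∑ b, p x b * ∑ u ∈ range n, hitProbEq p b y u := by
            rw [add_zero, sum_comm]; simp only [mul_sum]
        _ ≤ ∑ b, p x b * 1 := sum_le_sum fun b _ => mul_le_mul_of_nonneg_left (ih b) (hp.1 x b)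
        _ = 1 := by simp [hp.2]

lemma IsStochastic.mem_rowStochastic (hp : IsStochastic p) : p ∈ Matrix.rowStochastic ℝ S :=
  Matrix.mem_rowStochastic_iff_sum.2 hp

lemma pow_apply_le_maxProb (hp : IsStochastic p) (s : ℕ) (x z : S) :
    (p ^ s) x z ≤ maxProb p x z :=
  le_ciSup ⟨1, Set.forall_mem_range.2 fun n =>
    Matrix.le_one_of_mem_rowStochastic (pow_mem hp.mem_rowStochastic n)⟩ s

lemma maxProb_nonneg (hp : IsStochastic p) (x z : S) : 0 ≤ maxProb p x z :=
  (Matrix.pow_apply_nonneg hp.1 0 x z).trans (pow_apply_le_maxProb hp 0 x z)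

lemma hitProbEq_add_le_sum_maxProb_mul (hp : IsStochastic p) (x y : S) (u s : ℕ) :
    hitProbEq p x y (u + s) ≤ ∑ z, maxProb p x z * hitProbEq p z y u :=
  (hitProbEq_add_le hp.1 x y u s).trans <| sum_le_sum fun z _ =>
    mul_le_mul_of_nonneg_right (pow_apply_le_maxProb hp s x z) (hitProbEq_nonneg hp.1 z y u)

lemma natCast_mul_hitProbEq_le_sum_maxProb (hp : IsStochastic p) (x y : S) (t : ℕ) :
    t * hitProbEq p x y t ≤ ∑ z, maxProb p x z := calc
  t * hitProbEq p x y t = ∑ s ∈ range t, hitProbEq p x y t := by simp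
  _ = ∑ s ∈ range t, hitProbEq p x y (t - 1 - s + (s + 1)) :=
      sum_congr rfl fun s hs => by rw [mem_range] at hs; congr 1; omega
  _ ≤ ∑ s ∈ range t, ∑ z, maxProb p x z * hitProbEq p z y (t - 1 - s) :=
      sum_le_sum fun s _ => hitProbEq_add_le_sum_maxProb_mul hp x y _ _
  _ = ∑ z, maxProb p x z * ∑ u ∈ range t, hitProbEq p z y u := by
      rw [sum_comm]; simp only [← mul_sum, sum_range_reflect (hitProbEq p _ y)]
  _ ≤ ∑ z, maxProb p x z := sum_le_sum fun z _ => mul_le_of_le_one_right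
      (maxProb_nonneg hp x z) (sum_range_hitProbEq_le_one hp z y t)

end

/-- Lemma 8: `P_x(τ(y) = t) ≤ (1/t) Σ_z p*(x, z)` for every `t > 0`. -/
theorem hitProbEq_le_sum_maxProb {S : Type*} [Fintype S] [DecidableEq S]
    (p : Matrix S S ℝ) (hp : IsStochastic p) (x y : S) (t : ℕ) (ht : 0 < t) :
    hitProbEq p x y t ≤ (1 / t) * ∑ z, maxProb p x z := by
  rw [one_div, inv_mul_eq_div, le_div_iff₀ (by exact_mod_cast ht), mul_comm]
  exact natCast_mul_hitProbEq_le_sum_maxProb hp x y t
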